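/- (Bauer–Fike bound on pseudospectral radius) Let A be a diagonalizable square complex matrix, A = V Λ V^{-1} with Λ diagonal. Then for every ε > 0, every point z in the ε-pseudospectrum of A lies within distance κ(V)·ε of the spectrum of A, where κ(V) = ‖V‖·‖V^{-1}‖; in particular ρ_ε(A) ≤ ρ(A) + κ(V)ε. -/

import Mathlib

open Matrix

/-- The ℓ²-operator norm of a complex matrix. -/
noncomputable def l2OpNorm {d : ℕ} (A : Matrix (Fin d) (Fin d) ℂ) : ℝ :=
  ‖LinearMap.toContinuousLinearMap (Matrix.toEuclideanLin A)‖

/-- The ε-pseudospectrum of a square complex matrix: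
`σ_ε(A) = σ(A) ∪ { z : ‖(A − zI)⁻¹‖ ≥ 1/ε }`. -/
noncomputable def pseudospectrum {d : ℕ} (ε : ℝ) (A : Matrix (Fin d) (Fin d) ℂ) : Set ℂ :=
  spectrum ℂ A ∪ { z : ℂ | 1 / ε ≤ l2OpNorm (A - z • 1)⁻¹ }

/-- The ε-pseudospectral radius `ρ_ε(A) = sup{ |z| : z ∈ σ_ε(A) }`. -/
noncomputable def pseudospectralRadius {d : ℕ} (ε : ℝ) (A : Matrix (Fin d) (Fin d) ℂ) : ℝ :=
  sSup ((fun z : ℂ => ‖z‖) '' pseudospectrum ε A)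

/-- The spectral radius `ρ(A) = sup{ |z| : z ∈ σ(A) }`. -/
noncomputable def matSpectralRadius {d : ℕ} (A : Matrix (Fin d) (Fin d) ℂ) : ℝ :=
  sSup ((fun z : ℂ => ‖z‖) '' spectrum ℂ A)

/-!
`A - z = V (Λ - z) V⁻¹`, so for `z ∉ σ(A)` the resolvent `(A - z)⁻¹` is `V (Λ - z)⁻¹ V⁻¹`, whose
ℓ²-operator norm is at most `κ(V)` times the largest `|λᵢ - z|⁻¹`, which is `1 / dist(z, σ(A))`.
Hence `‖(A - z)⁻¹‖ ≥ 1/ε` forces `dist(z, σ(A)) ≤ κ(V) ε`, and the bound on the pseudospectral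
radius follows from the triangle inequality `|z| ≤ |w| + |z - w|` at a nearest eigenvalue `w`.
-/

open scoped Matrix.Norms.L2Operator

lemma l2OpNorm_eq_norm {d : ℕ} (A : Matrix (Fin d) (Fin d) ℂ) : l2OpNorm A = ‖A‖ := rfl

namespace Matrix

variable {n R : Type*} [Fintype n] [DecidableEq n] [CommRing R]

theorem spectrum_conj {V : Matrix n n R} (hV : IsUnit V) (M : Matrix n n R) :
    spectrum R (V * M * V⁻¹) = spectrum R M := by
  have hinv : ((hV.unit⁻¹ : (Matrix n n R)ˣ) : Matrix n n R) = V⁻¹ := by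
    rw [coe_units_inv, hV.unit_spec]
  simpa only [hV.unit_spec, hinv] using spectrum.units_conjugate (R := R) (a := M) (u := hV.unit)

theorem inv_conj {V : Matrix n n R} (hV : IsUnit V) (M : Matrix n n R) :
    (V * M * V⁻¹)⁻¹ = V * M⁻¹ * V⁻¹ := by
  rw [mul_inv_rev, mul_inv_rev, nonsing_inv_nonsing_inv V ((isUnit_iff_isUnit_det V).mp hV),
    Matrix.mul_assoc]

theorem conj_sub_smul_one {V : Matrix n n R} (hV : IsUnit V) (M : Matrix n n R) (z : R) :
    V * M * V⁻¹ - z • 1 = V * (M - z • 1) * V⁻¹ := by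
  rw [Matrix.mul_sub, Matrix.sub_mul, mul_smul_comm, Matrix.mul_one, smul_mul_assoc,
    mul_nonsing_inv V ((isUnit_iff_isUnit_det V).mp hV)]

theorem inv_diagonal_of_ne_zero {K : Type*} [Field K] {v : n → K} (hv : ∀ i, v i ≠ 0) :
    (diagonal v)⁻¹ = diagonal v⁻¹ := by
  refine inv_eq_left_inv ?_
  rw [diagonal_mul_diagonal, ← diagonal_one]
  exact congrArg diagonal (funext fun i => inv_mul_cancel₀ (hv i))

end Matrix

section Diagonalizable

variable {d : ℕ} {A V Λ : Matrix (Fin d) (Fin d) ℂ}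

theorem spectrum_eq_range_diag (hV : IsUnit V) (hΛ : Λ.IsDiag) (hdiag : A = V * Λ * V⁻¹) :
    spectrum ℂ A = Set.range Λ.diag := by
  rw [hdiag, Matrix.spectrum_conj hV, ← hΛ.diagonal_diag, spectrum_diagonal, diag_diagonal]

theorem inv_sub_smul_one_eq_conj_diagonal (hV : IsUnit V) (hΛ : Λ.IsDiag)
    (hdiag : A = V * Λ * V⁻¹) {z : ℂ} (hz : ∀ i, Λ i i ≠ z) :
    (A - z • 1)⁻¹ = V * diagonal (fun i => (Λ i i - z)⁻¹) * V⁻¹ := by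
  have hΛz : Λ - z • 1 = diagonal (fun i => Λ i i - z) := by
    conv_lhs => rw [← hΛ.diagonal_diag]
    rw [smul_one_eq_diagonal, diagonal_sub]
    rfl
  rw [hdiag, Matrix.conj_sub_smul_one hV, Matrix.inv_conj hV, hΛz,
    Matrix.inv_diagonal_of_ne_zero fun i => sub_ne_zero.mpr (hz i)]
  rfl

/-- The Bauer–Fike resolvent bound `‖(A - z)⁻¹‖ ≤ κ(V) / dist(z, σ(A))`, multiplied out so that
it holds trivially when the distance is `0`. -/
theorem l2OpNorm_inv_sub_smul_one_mul_infDist_le (hV : IsUnit V) (hΛ : Λ.IsDiag)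
    (hdiag : A = V * Λ * V⁻¹) (z : ℂ) :
    l2OpNorm (A - z • 1)⁻¹ * Metric.infDist z (spectrum ℂ A) ≤ l2OpNorm V * l2OpNorm V⁻¹ := by
  set δ := Metric.infDist z (spectrum ℂ A)
  rcases (Metric.infDist_nonneg : 0 ≤ δ).eq_or_lt with hδ | hδ
  · rw [show δ = 0 from hδ.symm, mul_zero]
    exact mul_nonneg (norm_nonneg _) (norm_nonneg _)
  have hδ_le : ∀ i, δ ≤ ‖Λ i i - z‖ := fun i => by
    rw [← dist_eq_norm, dist_comm]
    exact Metric.infDist_le_dist_of_mem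
      ((spectrum_eq_range_diag hV hΛ hdiag).symm ▸ Set.mem_range_self i)
  have hz : ∀ i, Λ i i ≠ z := fun i h => by
    have := hδ_le i
    rw [h, sub_self, norm_zero] at this
    linarith
  set D := diagonal (fun i => (Λ i i - z)⁻¹)
  have hD : ‖D‖ * δ ≤ 1 := by
    rw [l2_opNorm_diagonal, ← le_div_iff₀ hδ, one_div]
    refine pi_norm_le_iff_of_nonneg (by positivity) |>.mpr fun i => ?_
    rw [norm_inv]
    exact inv_anti₀ hδ (hδ_le i)
  rw [l2OpNorm_eq_norm, inv_sub_smul_one_eq_conj_diagonal hV hΛ hdiag hz]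
  calc ‖V * D * V⁻¹‖ * δ ≤ ‖V‖ * ‖D‖ * ‖V⁻¹‖ * δ := by gcongr; exact norm_mul₃_le
    _ = ‖V‖ * (‖D‖ * δ) * ‖V⁻¹‖ := by ring
    _ ≤ ‖V‖ * 1 * ‖V⁻¹‖ := by gcongr
    _ = l2OpNorm V * l2OpNorm V⁻¹ := by rw [mul_one]; rfl

theorem exists_mem_spectrum_norm_sub_le_of_mem_pseudospectrum (hV : IsUnit V) (hΛ : Λ.IsDiag)
    (hdiag : A = V * Λ * V⁻¹) {ε : ℝ} (hε : 0 < ε) {z : ℂ} (hz : z ∈ pseudospectrum ε A) :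
    ∃ w ∈ spectrum ℂ A, ‖z - w‖ ≤ l2OpNorm V * l2OpNorm V⁻¹ * ε := by
  have hκ : 0 ≤ l2OpNorm V * l2OpNorm V⁻¹ := mul_nonneg (norm_nonneg _) (norm_nonneg _)
  rcases hz with hz | hz
  · exact ⟨z, hz, by simpa using mul_nonneg hκ hε.le⟩
  have hR : 1 / ε ≤ l2OpNorm (A - z • 1)⁻¹ := hz
  have : Nonempty (Fin d) := by
    refine (isEmpty_or_nonempty (Fin d)).resolve_left fun _ => ?_
    rw [Subsingleton.elim (A - z • 1)⁻¹ 0, l2OpNorm_eq_norm, norm_zero] at hR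
    exact (one_div_pos.mpr hε).not_ge hR
  obtain ⟨w, hw, hzw⟩ := A.finite_spectrum.isCompact.exists_infDist_eq_dist
    ((spectrum_eq_range_diag hV hΛ hdiag) ▸ Set.range_nonempty _) z
  refine ⟨w, hw, ?_⟩
  have hres := l2OpNorm_inv_sub_smul_one_mul_infDist_le hV hΛ hdiag z
  rw [hzw, dist_eq_norm] at hres
  have hbound : 1 / ε * ‖z - w‖ ≤ l2OpNorm V * l2OpNorm V⁻¹ :=
    (mul_le_mul_of_nonneg_right hR (norm_nonneg _)).trans hres
  rwa [one_div_mul_eq_div, div_le_iff₀ hε] at hbound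

end Diagonalizable

theorem sSup_norm_image_le_add {E : Type*} [SeminormedAddCommGroup E] {S T : Set E} {r : ℝ}
    (hT : BddAbove ((fun z : E => ‖z‖) '' T)) (hr : 0 ≤ r)
    (h : ∀ z ∈ S, ∃ w ∈ T, ‖z - w‖ ≤ r) :
    sSup ((fun z : E => ‖z‖) '' S) ≤ sSup ((fun z : E => ‖z‖) '' T) + r := by
  have hT₀ : 0 ≤ sSup ((fun z : E => ‖z‖) '' T) :=
    Real.sSup_nonneg (Set.forall_mem_image.mpr fun w _ => norm_nonneg w)
  refine Real.sSup_le (Set.forall_mem_image.mpr fun z hz => ?_) (by linarith)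
  obtain ⟨w, hw, hzw⟩ := h z hz
  calc ‖z‖ ≤ ‖w‖ + ‖z - w‖ := norm_le_norm_add_norm_sub' z w
    _ ≤ _ := add_le_add (le_csSup hT (Set.mem_image_of_mem _ hw)) hzw

/-- Bauer–Fike bound on the pseudospectral radius: if `A = V Λ V⁻¹` is diagonalizable,
then every point of the ε-pseudospectrum of `A` lies within distance `κ(V)·ε` of the
spectrum of `A`, where `κ(V) = ‖V‖‖V⁻¹‖`; in particular `ρ_ε(A) ≤ ρ(A) + κ(V)ε`. -/
theorem bauer_fike_pseudospectrum
    {d : ℕ} (A V Λ : Matrix (Fin d) (Fin d) ℂ) (hV : IsUnit V) (hΛ : Λ.IsDiag)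
    (hdiag : A = V * Λ * V⁻¹) (ε : ℝ) (hε : 0 < ε) :
    (∀ z ∈ pseudospectrum ε A, ∃ w ∈ spectrum ℂ A,
        ‖z - w‖ ≤ (l2OpNorm V * l2OpNorm V⁻¹) * ε) ∧
    pseudospectralRadius ε A ≤ matSpectralRadius A + (l2OpNorm V * l2OpNorm V⁻¹) * ε := by
  have hnear : ∀ z ∈ pseudospectrum ε A, ∃ w ∈ spectrum ℂ A,
      ‖z - w‖ ≤ (l2OpNorm V * l2OpNorm V⁻¹) * ε := fun z hz =>
    exists_mem_spectrum_norm_sub_le_of_mem_pseudospectrum hV hΛ hdiag hε hz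
  refine ⟨hnear, sSup_norm_image_le_add (A.finite_spectrum.image _).bddAbove ?_ hnear⟩
  exact mul_nonneg (mul_nonneg (norm_nonneg _) (norm_nonneg _)) hε.le
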